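/- Let C be an additive idempotent complete category. The following are equivalent: (a) every morphism f in C factors as f = j p with p a split epimorphism and j a split monomorphism; (b) C has kernels and every monomorphism in C splits; (c) C has cokernels and every epimorphism in C splits; (d) C is abelian and every object of C is both projective and injective. -/
import Mathlib


open CategoryTheory CategoryTheory.Limits

namespace Paper

/-- A category is von Neumann regular if every morphism factors as a split epimorphism
followed by a split monomorphism. -/
def VonNeumannRegular (C : Type*) [Category C] : Prop :=
  ∀ ⦃X Y : C⦄ (f : X ⟶ Y), ∃ (W : C) (p : X ⟶ W) (j : W ⟶ Y),
    IsSplitEpi p ∧ IsSplitMono j ∧ p ≫ j = f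

end Paper

open Paper

section Aux

variable {C : Type*} [Category C] [Preadditive C] [IsIdempotentComplete C]

lemma aux_kernel {X W Y : C} (p : X ⟶ W) (s : W ⟶ X) (hs : s ≫ p = 𝟙 W)
    (j : W ⟶ Y) (hj : Mono j) :
    ∃ (K : C) (i : K ⟶ X) (w : i ≫ (p ≫ j) = 0), Nonempty (IsLimit (KernelFork.ofι i w)) := by
  obtain ⟨K, i, e, hie, hei⟩ := IsIdempotentComplete.idempotents_split X (𝟙 X - p ≫ s)
    (by simp [Preadditive.sub_comp, Preadditive.comp_sub, reassoc_of% hs])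
  haveI : IsSplitMono i := IsSplitMono.mk' ⟨e, hie⟩
  have hzero : (𝟙 X - p ≫ s) ≫ p = 0 := by
    simp [Preadditive.sub_comp, hs]
  have hid : i ≫ (𝟙 X - p ≫ s) = i := by
    rw [← hei, ← Category.assoc, hie, Category.id_comp]
  have hip : i ≫ p = 0 := by
    rw [← hid, Category.assoc, hzero, comp_zero]
  have w : i ≫ (p ≫ j) = 0 := by rw [← Category.assoc, hip, zero_comp]
  refine ⟨K, i, w, ⟨KernelFork.IsLimit.ofι' i w (fun {A} k hk => ?_)⟩⟩
  have hkp : k ≫ p = 0 := by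
    haveI := hj
    rw [← cancel_mono j, Category.assoc, hk, zero_comp]
  refine ⟨k ≫ e, ?_⟩
  rw [Category.assoc, hei, Preadditive.comp_sub, Category.comp_id, ← Category.assoc, hkp,
    zero_comp, sub_zero]

lemma aux_cokernel {X W Y : C} (p : X ⟶ W) (hp : Epi p) (j : W ⟶ Y) (r : Y ⟶ W)
    (hr : j ≫ r = 𝟙 W) :
    ∃ (Z : C) (g : Y ⟶ Z) (w : (p ≫ j) ≫ g = 0), Nonempty (IsColimit (CokernelCofork.ofπ g w)) := by
  obtain ⟨Z, i, e, hie, hei⟩ := IsIdempotentComplete.idempotents_split Y (𝟙 Y - r ≫ j)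
    (by simp [Preadditive.sub_comp, Preadditive.comp_sub, reassoc_of% hr])
  haveI : IsSplitMono i := IsSplitMono.mk' ⟨e, hie⟩
  haveI : IsSplitEpi e := IsSplitEpi.mk' ⟨i, hie⟩
  have hzero : j ≫ (𝟙 Y - r ≫ j) = 0 := by
    rw [Preadditive.comp_sub, Category.comp_id, ← Category.assoc, hr, Category.id_comp, sub_self]
  have hje : j ≫ e = 0 := by
    rw [← cancel_mono i, Category.assoc, hei, hzero, zero_comp]
  have w : (p ≫ j) ≫ e = 0 := by rw [Category.assoc, hje, comp_zero]
  refine ⟨Z, e, w, ⟨CokernelCofork.IsColimit.ofπ' e w (fun {A} k hk => ?_)⟩⟩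
  have hjk : j ≫ k = 0 := by
    haveI := hp
    rw [← cancel_epi p, ← Category.assoc, hk, comp_zero]
  refine ⟨i ≫ k, ?_⟩
  rw [← Category.assoc, hei, Preadditive.sub_comp, Category.id_comp, Category.assoc, hjk,
    comp_zero, sub_zero]

lemma vnr_monos_split (h : VonNeumannRegular C) {X Y : C} (f : X ⟶ Y) (hf : Mono f) :
    IsSplitMono f := by
  obtain ⟨W, p, j, hp, hj, hfac⟩ := h f
  haveI := hf; haveI := hp; haveI := hj
  haveI : Mono (p ≫ j) := by rwa [hfac]
  haveI : Mono p := mono_of_mono p j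
  have hps : p ≫ section_ p = 𝟙 X := by
    rw [← cancel_mono p, Category.assoc, IsSplitEpi.id, Category.comp_id, Category.id_comp]
  refine IsSplitMono.mk' ⟨retraction j ≫ section_ p, ?_⟩
  rw [← hfac, Category.assoc, ← Category.assoc j, IsSplitMono.id, Category.id_comp, hps]

lemma vnr_epis_split (h : VonNeumannRegular C) {X Y : C} (f : X ⟶ Y) (hf : Epi f) :
    IsSplitEpi f := by
  obtain ⟨W, p, j, hp, hj, hfac⟩ := h f
  haveI := hf; haveI := hp; haveI := hj
  haveI : Epi (p ≫ j) := by rwa [hfac]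
  haveI : Epi j := epi_of_epi p j
  have hrj : retraction j ≫ j = 𝟙 Y := by
    rw [← cancel_epi j, ← Category.assoc, IsSplitMono.id, Category.comp_id, Category.id_comp]
  refine IsSplitEpi.mk' ⟨retraction j ≫ section_ p, ?_⟩
  rw [← hfac, Category.assoc, ← Category.assoc (section_ p), IsSplitEpi.id, Category.id_comp, hrj]

lemma vnr_hasKernels (h : VonNeumannRegular C) : HasKernels C := by
  refine ⟨fun {X Y} f => ?_⟩
  obtain ⟨W, p, j, hp, hj, hfac⟩ := h f
  haveI := hj
  obtain ⟨K, i, w, ⟨hl⟩⟩ := aux_kernel p (section_ p) (IsSplitEpi.id p) j inferInstance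
  subst hfac
  exact HasLimit.mk ⟨_, hl⟩

lemma vnr_hasCokernels (h : VonNeumannRegular C) : HasCokernels C := by
  refine ⟨fun {X Y} f => ?_⟩
  obtain ⟨W, p, j, hp, hj, hfac⟩ := h f
  haveI := hp; haveI := hj
  obtain ⟨Z, g, w, ⟨hc⟩⟩ := aux_cokernel p inferInstance j (retraction j) (IsSplitMono.id j)
  subst hfac
  exact HasColimit.mk ⟨_, hc⟩

lemma b_to_vnr [HasKernels C] (hm : ∀ ⦃X Y : C⦄ (f : X ⟶ Y), Mono f → IsSplitMono f) :
    VonNeumannRegular C := by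
  intro X Y f
  set k : kernel f ⟶ X := kernel.ι f with hk
  haveI : IsSplitMono k := hm k inferInstance
  obtain ⟨W, i, e, hie, hei⟩ := IsIdempotentComplete.idempotents_split X (𝟙 X - retraction k ≫ k)
    (by simp [Preadditive.sub_comp, Preadditive.comp_sub, reassoc_of% (IsSplitMono.id k)])
  haveI : IsSplitMono i := IsSplitMono.mk' ⟨e, hie⟩
  have hke : k ≫ e = 0 := by
    rw [← cancel_mono i, Category.assoc, hei, Preadditive.comp_sub, Category.comp_id,
      ← Category.assoc, IsSplitMono.id, Category.id_comp, sub_self, zero_comp]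
  have hmono : Mono (i ≫ f) := by
    apply Preadditive.mono_of_cancel_zero
    intro A g hg
    rw [← Category.assoc] at hg
    have : (g ≫ i) ≫ f = 0 := hg
    have hd : kernel.lift f (g ≫ i) this ≫ k = g ≫ i := kernel.lift_ι f _ this
    calc g = g ≫ 𝟙 W := by rw [Category.comp_id]
    _ = (g ≫ i) ≫ e := by rw [← hie, ← Category.assoc]
    _ = kernel.lift f (g ≫ i) this ≫ k ≫ e := by rw [← Category.assoc, hd]
    _ = 0 := by rw [hke, comp_zero]
  refine ⟨W, e, i ≫ f, IsSplitEpi.mk' ⟨i, hie⟩, hm _ hmono, ?_⟩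
  rw [← Category.assoc, hei, Preadditive.sub_comp, Category.id_comp, Category.assoc,
    kernel.condition, comp_zero, sub_zero]

lemma c_to_vnr [HasCokernels C] (he : ∀ ⦃X Y : C⦄ (f : X ⟶ Y), Epi f → IsSplitEpi f) :
    VonNeumannRegular C := by
  intro X Y f
  set c : Y ⟶ cokernel f := cokernel.π f with hc
  haveI : IsSplitEpi c := he c inferInstance
  obtain ⟨W, i, e, hie, hei⟩ := IsIdempotentComplete.idempotents_split Y (𝟙 Y - c ≫ section_ c)
    (by simp [Preadditive.sub_comp, Preadditive.comp_sub, reassoc_of% (IsSplitEpi.id c)])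
  haveI : IsSplitMono i := IsSplitMono.mk' ⟨e, hie⟩
  haveI : IsSplitEpi e := IsSplitEpi.mk' ⟨i, hie⟩
  have hic : i ≫ c = 0 := by
    rw [← cancel_epi e, ← Category.assoc, hei, Preadditive.sub_comp, Category.id_comp,
      Category.assoc, IsSplitEpi.id, Category.comp_id, sub_self, comp_zero]
  have hepi : Epi (f ≫ e) := by
    apply Preadditive.epi_of_cancel_zero
    intro A g hg
    rw [Category.assoc] at hg
    have hd : c ≫ cokernel.desc f (e ≫ g) hg = e ≫ g := cokernel.π_desc f _ hg
    calc g = 𝟙 W ≫ g := by rw [Category.id_comp]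
    _ = i ≫ e ≫ g := by rw [← hie, Category.assoc]
    _ = (i ≫ c) ≫ cokernel.desc f (e ≫ g) hg := by rw [Category.assoc, hd]
    _ = 0 := by rw [hic, zero_comp]
  refine ⟨W, f ≫ e, i, he _ hepi, inferInstance, ?_⟩
  rw [Category.assoc, hei, Preadditive.comp_sub, Category.comp_id, ← Category.assoc,
    cokernel.condition, zero_comp, sub_zero]

lemma vnr_mono_is_kernel (h : VonNeumannRegular C) {X Y : C} (f : X ⟶ Y) (hf : Mono f) :
    ∃ (Z : C) (g : Y ⟶ Z) (w : f ≫ g = 0), Nonempty (IsLimit (KernelFork.ofι f w)) := by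
  haveI := hf
  haveI := vnr_monos_split h f hf
  obtain ⟨Z, i, e, hie, hei⟩ := IsIdempotentComplete.idempotents_split Y (𝟙 Y - retraction f ≫ f)
    (by simp [Preadditive.sub_comp, Preadditive.comp_sub, reassoc_of% (IsSplitMono.id f)])
  haveI : IsSplitMono i := IsSplitMono.mk' ⟨e, hie⟩
  have w : f ≫ e = 0 := by
    rw [← cancel_mono i, Category.assoc, hei, Preadditive.comp_sub, Category.comp_id,
      ← Category.assoc, IsSplitMono.id, Category.id_comp, sub_self, zero_comp]
  refine ⟨Z, e, w, ⟨KernelFork.IsLimit.ofι' f w (fun {A} k hk => ?_)⟩⟩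
  refine ⟨k ≫ retraction f, ?_⟩
  have : k ≫ (𝟙 Y - retraction f ≫ f) = 0 := by
    rw [← hei, ← Category.assoc, hk, zero_comp]
  rw [Preadditive.comp_sub, Category.comp_id, sub_eq_zero] at this
  rw [Category.assoc]; exact this.symm

lemma vnr_epi_is_cokernel (h : VonNeumannRegular C) {X Y : C} (f : X ⟶ Y) (hf : Epi f) :
    ∃ (W : C) (g : W ⟶ X) (w : g ≫ f = 0), Nonempty (IsColimit (CokernelCofork.ofπ f w)) := by
  haveI := hf
  haveI := vnr_epis_split h f hf
  obtain ⟨W, i, e, hie, hei⟩ := IsIdempotentComplete.idempotents_split X (𝟙 X - f ≫ section_ f)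
    (by simp [Preadditive.sub_comp, Preadditive.comp_sub, reassoc_of% (IsSplitEpi.id f)])
  haveI : IsSplitEpi e := IsSplitEpi.mk' ⟨i, hie⟩
  have w : i ≫ f = 0 := by
    rw [← cancel_epi e, ← Category.assoc, hei, Preadditive.sub_comp, Category.id_comp,
      Category.assoc, IsSplitEpi.id, Category.comp_id, sub_self, comp_zero]
  refine ⟨W, i, w, ⟨CokernelCofork.IsColimit.ofπ' f w (fun {A} k hk => ?_)⟩⟩
  refine ⟨section_ f ≫ k, ?_⟩
  have : (𝟙 X - f ≫ section_ f) ≫ k = 0 := by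
    rw [← hei, Category.assoc, hk, comp_zero]
  rw [Preadditive.sub_comp, Category.id_comp, sub_eq_zero] at this
  rw [← Category.assoc]; exact this.symm

end Aux

/-- For an additive idempotent complete category `C`, the following are equivalent:
(a) `C` is von Neumann regular; (b) `C` has kernels and every monomorphism splits;
(c) `C` has cokernels and every epimorphism splits; (d) `C` is abelian (it has kernels
and cokernels, every monomorphism is a kernel and every epimorphism is a cokernel) and
every object is both projective and injective. -/
theorem stmt_9 {C : Type*} [Category C] [Preadditive C] [HasZeroObject C]
    [HasFiniteBiproducts C] [IsIdempotentComplete C] :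
    (VonNeumannRegular C ↔
      (HasKernels C ∧ ∀ ⦃X Y : C⦄ (f : X ⟶ Y), Mono f → IsSplitMono f)) ∧
    (VonNeumannRegular C ↔
      (HasCokernels C ∧ ∀ ⦃X Y : C⦄ (f : X ⟶ Y), Epi f → IsSplitEpi f)) ∧
    (VonNeumannRegular C ↔
      (HasKernels C ∧ HasCokernels C ∧
        (∀ ⦃X Y : C⦄ (f : X ⟶ Y), Mono f → ∃ (Z : C) (g : Y ⟶ Z) (w : f ≫ g = 0),
          Nonempty (IsLimit (KernelFork.ofι f w))) ∧
        (∀ ⦃X Y : C⦄ (f : X ⟶ Y), Epi f → ∃ (W : C) (g : W ⟶ X) (w : g ≫ f = 0),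
          Nonempty (IsColimit (CokernelCofork.ofπ f w))) ∧
        (∀ X : C, Projective X ∧ Injective X))) := by
  have hb : VonNeumannRegular C ↔
      (HasKernels C ∧ ∀ ⦃X Y : C⦄ (f : X ⟶ Y), Mono f → IsSplitMono f) := by
    constructor
    · intro h
      exact ⟨vnr_hasKernels h, fun X Y f hf => vnr_monos_split h f hf⟩
    · rintro ⟨hk, hm⟩
      haveI := hk
      exact b_to_vnr hm
  have hc : VonNeumannRegular C ↔
      (HasCokernels C ∧ ∀ ⦃X Y : C⦄ (f : X ⟶ Y), Epi f → IsSplitEpi f) := by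
    constructor
    · intro h
      exact ⟨vnr_hasCokernels h, fun X Y f hf => vnr_epis_split h f hf⟩
    · rintro ⟨hck, he⟩
      haveI := hck
      exact c_to_vnr he
  refine ⟨hb, hc, ?_⟩
  constructor
  · intro h
    refine ⟨vnr_hasKernels h, vnr_hasCokernels h,
      fun X Y f hf => vnr_mono_is_kernel h f hf,
      fun X Y f hf => vnr_epi_is_cokernel h f hf,
      fun X => ⟨⟨fun {E X'} f e he => ?_⟩, ⟨fun {A B} g f hf => ?_⟩⟩⟩
    · haveI := he
      haveI := vnr_epis_split h e he
      exact ⟨f ≫ section_ e, by rw [Category.assoc, IsSplitEpi.id, Category.comp_id]⟩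
    · haveI := hf
      haveI := vnr_monos_split h f hf
      exact ⟨retraction f ≫ g, by rw [← Category.assoc, IsSplitMono.id, Category.id_comp]⟩
  · rintro ⟨hk, _, _, _, hPI⟩
    haveI := hk
    apply b_to_vnr
    intro X Y f hf
    haveI := hf
    obtain ⟨r, hr⟩ := (hPI X).2.factors (𝟙 X) f
    exact IsSplitMono.mk' ⟨r, hr⟩
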